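/- Let R be a principal ideal domain and M ≅ R/(d₁) × … × R/(dₙ) a finitely generated torsion R-module with d₁ ∣ d₂ ∣ … ∣ dₙ. Then for 0 ≤ k ≤ n, the kth Fitting ideal of M over R is the principal ideal generated by d₁·…·d_{n−k} (with the convention that the empty product is 1, so Fitⁿ_R(M) = R). -/

import Mathlib

/-- The `k`-th determinantal ideal of a matrix: the ideal generated by its `k × k`
minors (with the conventions `D_0 = R` and `D_k = 0` for `k > min(m,n)`). -/
def detIdeal {R : Type*} [CommRing R] {m n : ℕ} (k : ℕ) (A : Matrix (Fin m) (Fin n) R) :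
    Ideal R :=
  Ideal.span {d | ∃ (r : Fin k → Fin m) (c : Fin k → Fin n),
    Function.Injective r ∧ Function.Injective c ∧ d = (A.submatrix r c).det}

/-- `A` is a presentation matrix for the `R`-module `M`, i.e. there is an exact sequence
`R^n → R^m → M → 0` in which the first map is given by `A`. -/
def IsPresentation {R M : Type*} [CommRing R] [AddCommGroup M] [Module R M] {m n : ℕ}
    (A : Matrix (Fin m) (Fin n) R) : Prop :=
  ∃ π : (Fin m → R) →ₗ[R] M, Function.Surjective π ∧
    LinearMap.ker π = LinearMap.range A.mulVecLin

/-- The `k`-th Fitting ideal of a finitely presented module `M`, defined via the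
determinantal ideals `D_{m-k}` of presentation matrices (all presentations give the same
ideal, so the supremum below is this common value). -/
def fittingIdeal (R M : Type*) [CommRing R] [AddCommGroup M] [Module R M] (k : ℕ) :
    Ideal R :=
  sSup {I | ∃ (m n : ℕ) (A : Matrix (Fin m) (Fin n) R),
    IsPresentation (M := M) A ∧ I = detIdeal (m - k) A}

/-!
Fitting ideals do not depend on the presentation. Given presentations `π : R^m → M` and
`π' : R^n → M` with relation matrices `A` and `A'`, lifting `π'` through `π` (free modules
are projective) gives `V` with `π' = π ∘ V`, and the relations of `M` on all `m + n`
generators are the columns of `[[A, -V], [0, 1]]`. Row operations turn this into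
`[[A, 0], [0, 1]]`, whose `j`-minors generate the same ideal as the `(j - n)`-minors of `A`;
symmetrically for `A'`, and the ideal of `j`-minors only depends on the column span.
The Fitting ideals of `R/(d₁) × ⋯ × R/(dₙ)` are therefore those of `diag(d₁, …, dₙ)`, whose
`t`-minors are multiples of products of `t` distinct `dᵢ`, each divisible by `d₁ ⋯ d_t`
along the divisibility chain.
-/

open Function

theorem Sum.exists_eq_inl_of_ne_inr {ε ι : Type*} [Subsingleton ι] {x : ε ⊕ ι} {i : ι}
    (h : x ≠ Sum.inr i) : ∃ a, x = Sum.inl a := by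
  rcases x with a | j
  · exact ⟨a, rfl⟩
  · exact absurd (congrArg Sum.inr (Subsingleton.elim j i)) h

theorem Fin.val_le_val_of_strictMono {t n : ℕ} {f : Fin t → Fin n} (hf : StrictMono f)
    (i : Fin t) : (i : ℕ) ≤ f i :=
  calc (i : ℕ) = (Finset.Iio i).card := (Fin.card_Iio i).symm
    _ ≤ (Finset.Iio (f i)).card := Finset.card_le_card_of_injOn f
          (fun a ha => by simpa using hf (by simpa using ha)) hf.injective.injOn
    _ = f i := Fin.card_Iio (f i)

theorem Fin.prod_filter_val_lt {M : Type*} [CommMonoid M] {t n : ℕ} (h : t ≤ n)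
    (f : Fin n → M) :
    ∏ i ∈ Finset.univ.filter (fun i : Fin n => (i : ℕ) < t), f i =
      ∏ i : Fin t, f (Fin.castLE h i) := by
  have : Finset.univ.filter (fun i : Fin n => (i : ℕ) < t) =
      Finset.univ.map (Fin.castLEEmb h) := by
    ext i
    simpa using ⟨fun hi => ⟨⟨i, hi⟩, rfl⟩, fun ⟨j, hj⟩ => hj ▸ j.isLt⟩
  rw [this, Finset.prod_map]
  rfl

-- Sorted, the `i`-th of `t` distinct indices is at least `i`.
theorem Fin.prod_filter_val_lt_dvd_prod_of_injective {M : Type*} [CommMonoid M] {t n : ℕ}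
    {d : Fin n → M} (hd : ∀ i j, i ≤ j → d i ∣ d j) {v : Fin t → Fin n} (hv : Injective v) :
    ∏ i ∈ Finset.univ.filter (fun i : Fin n => (i : ℕ) < t), d i ∣ ∏ i, d (v i) := by
  have hw : StrictMono (v ∘ Tuple.sort v) :=
    (Tuple.monotone_sort v).strictMono_of_injective (hv.comp (Tuple.sort v).injective)
  rw [Fin.prod_filter_val_lt (Fin.le_of_injective v hv),
    ← Equiv.prod_comp (Tuple.sort v) fun i => d (v i)]
  exact Finset.prod_dvd_prod_of_dvd _ _ fun i _ =>
    hd _ _ (by simpa [Fin.le_def] using Fin.val_le_val_of_strictMono hw i)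

namespace Matrix

variable {R : Type*} [CommRing R] {α β γ δ : Type*}

-- `detIdeal` for arbitrary index types, so that it applies to block matrices indexed by sums.
def minorIdeal (k : ℕ) (A : Matrix α β R) : Ideal R :=
  Ideal.span {d | ∃ (r : Fin k → α) (c : Fin k → β), Injective r ∧ Injective c ∧
    d = (A.submatrix r c).det}

theorem det_submatrix_mem_minorIdeal {k : ℕ} (A : Matrix α β R) {r : Fin k → α}
    {c : Fin k → β} (hr : Injective r) (hc : Injective c) :
    (A.submatrix r c).det ∈ A.minorIdeal k :=
  Ideal.subset_span ⟨r, c, hr, hc, rfl⟩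

theorem minorIdeal_le {k : ℕ} {A : Matrix α β R} {I : Ideal R}
    (h : ∀ (r : Fin k → α) (c : Fin k → β), Injective r → Injective c →
      (A.submatrix r c).det ∈ I) : A.minorIdeal k ≤ I := by
  rw [minorIdeal, Ideal.span_le]
  rintro _ ⟨r, c, hr, hc, rfl⟩
  exact h r c hr hc

@[simp]
theorem minorIdeal_zero (A : Matrix α β R) : A.minorIdeal 0 = ⊤ := by
  rw [Ideal.eq_top_iff_one]
  simpa using A.det_submatrix_mem_minorIdeal (r := Fin.elim0) (c := Fin.elim0)
    (fun i => i.elim0) (fun i => i.elim0)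

theorem minorIdeal_succ_le (k : ℕ) (A : Matrix α β R) :
    A.minorIdeal (k + 1) ≤ A.minorIdeal k :=
  minorIdeal_le fun r c hr hc => by
    rw [det_succ_row_zero]
    refine Ideal.sum_mem _ fun j _ => Ideal.mul_mem_left _ _ ?_
    rw [submatrix_submatrix]
    exact A.det_submatrix_mem_minorIdeal (hr.comp (Fin.succ_injective _))
      (hc.comp Fin.succAbove_right_injective)

theorem minorIdeal_submatrix_le (k : ℕ) (A : Matrix α β R) {e : γ → α} {f : δ → β}
    (he : Injective e) (hf : Injective f) :
    (A.submatrix e f).minorIdeal k ≤ A.minorIdeal k :=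
  minorIdeal_le fun r c hr hc => by
    rw [submatrix_submatrix]
    exact A.det_submatrix_mem_minorIdeal (he.comp hr) (hf.comp hc)

@[simp]
theorem minorIdeal_submatrix_equiv (k : ℕ) (A : Matrix α β R) (e : γ ≃ α) (f : δ ≃ β) :
    (A.submatrix e f).minorIdeal k = A.minorIdeal k := by
  refine le_antisymm (minorIdeal_submatrix_le k A e.injective f.injective) ?_
  simpa using minorIdeal_submatrix_le k (A.submatrix e f) e.symm.injective f.symm.injective

@[simp]
theorem minorIdeal_transpose (k : ℕ) (A : Matrix α β R) : Aᵀ.minorIdeal k = A.minorIdeal k := by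
  refine congrArg Ideal.span (Set.ext fun x => ⟨?_, ?_⟩) <;> rintro ⟨r, c, hr, hc, rfl⟩
  · exact ⟨c, r, hc, hr, by rw [← det_transpose, transpose_submatrix, transpose_transpose]⟩
  · exact ⟨c, r, hc, hr, by rw [← det_transpose, transpose_submatrix]⟩

theorem minorIdeal_mul_le_left [Fintype β] (k : ℕ) (A : Matrix α β R) (C : Matrix β γ R) :
    (A * C).minorIdeal k ≤ A.minorIdeal k := by
  refine minorIdeal_le fun r c hr hc => ?_
  have hrows : ((A * C).submatrix r c)ᵀ = fun j => ∑ b, C b (c j) • fun i => A (r i) b := by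
    ext j i
    simp [mul_apply, mul_comm]
  -- one term per `p : Fin k → β`: a minor of `A` if `p` is injective, zero otherwise
  rw [← det_transpose, hrows]
  change detRowAlternating.toMultilinearMap _ ∈ _
  rw [MultilinearMap.map_sum]
  refine Ideal.sum_mem _ fun p _ => ?_
  rw [MultilinearMap.map_smul_univ]
  refine Ideal.mul_mem_left _ _ ?_
  suffices (A.submatrix r p).det ∈ A.minorIdeal k by
    convert this using 1
    exact det_transpose (A.submatrix r p)
  by_cases hp : Injective p
  · exact A.det_submatrix_mem_minorIdeal hr hp
  · obtain ⟨a, b, hab, hne⟩ := not_injective_iff.mp hp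
    rw [det_zero_of_column_eq hne fun i => by simp [hab]]
    exact zero_mem _

theorem minorIdeal_mul_le_right [Fintype α] (k : ℕ) (P : Matrix γ α R) (A : Matrix α β R) :
    (P * A).minorIdeal k ≤ A.minorIdeal k := by
  calc (P * A).minorIdeal k = (Aᵀ * Pᵀ).minorIdeal k := by
        rw [← transpose_mul, minorIdeal_transpose]
    _ ≤ Aᵀ.minorIdeal k := minorIdeal_mul_le_left k Aᵀ Pᵀ
    _ = A.minorIdeal k := minorIdeal_transpose k A

theorem minorIdeal_le_of_range_le [Fintype β] [Fintype γ] (k : ℕ) {A : Matrix α β R}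
    {A' : Matrix α γ R} (h : LinearMap.range A'.mulVecLin ≤ LinearMap.range A.mulVecLin) :
    A'.minorIdeal k ≤ A.minorIdeal k := by
  classical
  choose y hy using fun j => h ⟨Pi.single j 1, rfl⟩
  have hA' : A' = A * (of y)ᵀ := by
    ext i j
    have hcol := congrFun (hy j) i
    rw [mulVecLin_apply, mulVecLin_apply, mulVec_single_one] at hcol
    simpa [mul_apply, mulVec, dotProduct] using hcol.symm
  exact hA' ▸ minorIdeal_mul_le_left k A _

theorem minorIdeal_eq_of_range_eq [Fintype β] [Fintype γ] (k : ℕ) {A : Matrix α β R}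
    {A' : Matrix α γ R} (h : LinearMap.range A.mulVecLin = LinearMap.range A'.mulVecLin) :
    A.minorIdeal k = A'.minorIdeal k :=
  le_antisymm (minorIdeal_le_of_range_le k h.le) (minorIdeal_le_of_range_le k h.ge)

theorem det_submatrix_fromBlocks_mem_minorIdeal {k : ℕ} (A : Matrix α β R) (B : Matrix α δ R)
    (C : Matrix γ β R) (D : Matrix γ δ R) {r : Fin k → α ⊕ γ} {c : Fin k → β ⊕ δ}
    (hr : Injective r) (hc : Injective c) (hrl : ∀ i, ∃ a, r i = Sum.inl a)
    (hcl : ∀ j, ∃ b, c j = Sum.inl b) :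
    ((fromBlocks A B C D).submatrix r c).det ∈ A.minorIdeal k := by
  choose r' hr' using hrl
  choose c' hc' using hcl
  obtain rfl : r = Sum.inl ∘ r' := funext hr'
  obtain rfl : c = Sum.inl ∘ c' := funext hc'
  exact A.det_submatrix_mem_minorIdeal hr.of_comp hc.of_comp

theorem minorIdeal_succ_fromBlocks_zero_one_le (A : Matrix α β R) (t : ℕ) :
    (fromBlocks A 0 0 (1 : Matrix (Fin 1) (Fin 1) R)).minorIdeal (t + 1) ≤ A.minorIdeal t := by
  -- A minor meeting the last row is expanded along that row, whose only nonzero entry is the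
  -- `1`; a minor avoiding it is zero if it meets the last column, else a minor of `A`.
  refine minorIdeal_le fun r c hr hc => ?_
  by_cases hrow : ∃ i₀, r i₀ = Sum.inr 0
  · obtain ⟨i₀, hi₀⟩ := hrow
    rw [det_succ_row _ i₀]
    refine Ideal.sum_mem _ fun j _ => ?_
    by_cases hj : c j = Sum.inr 0
    · refine Ideal.mul_mem_left _ _ ?_
      exact det_submatrix_fromBlocks_mem_minorIdeal A 0 0 1
        (hr.comp Fin.succAbove_right_injective) (hc.comp Fin.succAbove_right_injective)
        (fun i => Sum.exists_eq_inl_of_ne_inr fun h =>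
          Fin.succAbove_ne i₀ i (hr (h.trans hi₀.symm)))
        (fun i => Sum.exists_eq_inl_of_ne_inr fun h =>
          Fin.succAbove_ne j i (hc (h.trans hj.symm)))
    · obtain ⟨b, hb⟩ := Sum.exists_eq_inl_of_ne_inr hj
      simp [hi₀, hb]
  · push Not at hrow
    by_cases hcol : ∃ j₀, c j₀ = Sum.inr 0
    · obtain ⟨j₀, hj₀⟩ := hcol
      rw [det_eq_zero_of_column_eq_zero j₀ fun i => ?_]
      · exact zero_mem _
      obtain ⟨a, ha⟩ := Sum.exists_eq_inl_of_ne_inr (hrow i)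
      simp [ha, hj₀]
    · push Not at hcol
      exact minorIdeal_succ_le t A (det_submatrix_fromBlocks_mem_minorIdeal A 0 0 1 hr hc
        (fun i => Sum.exists_eq_inl_of_ne_inr (hrow i))
        (fun j => Sum.exists_eq_inl_of_ne_inr (hcol j)))

theorem minorIdeal_succ_fromBlocks_zero_one (A : Matrix α β R) (t : ℕ) :
    (fromBlocks A 0 0 (1 : Matrix (Fin 1) (Fin 1) R)).minorIdeal (t + 1) = A.minorIdeal t := by
  set B := fromBlocks A 0 0 (1 : Matrix (Fin 1) (Fin 1) R)
  refine le_antisymm (minorIdeal_succ_fromBlocks_zero_one_le A t)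
    (minorIdeal_le fun r c hr hc => ?_)
  have hblocks :
      B.submatrix (Sum.map r id) (Sum.map c id) = fromBlocks (A.submatrix r c) 0 0 1 := by
    ext (a | a) (b | b) <;> rfl
  have hdet : ((B.submatrix (Sum.map r id) (Sum.map c id)).submatrix finSumFinEquiv.symm
      finSumFinEquiv.symm).det = (A.submatrix r c).det := by
    rw [det_submatrix_equiv_self, hblocks, det_fromBlocks_zero₂₁, det_one, mul_one]
  rw [← hdet, submatrix_submatrix]
  exact B.det_submatrix_mem_minorIdeal
    ((Sum.map_injective.2 ⟨hr, injective_id⟩).comp finSumFinEquiv.symm.injective)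
    ((Sum.map_injective.2 ⟨hc, injective_id⟩).comp finSumFinEquiv.symm.injective)

theorem fromBlocks_zero_one_sum [DecidableEq γ] [DecidableEq δ] (A : Matrix α β R) :
    fromBlocks A 0 0 (1 : Matrix (γ ⊕ δ) (γ ⊕ δ) R) =
      (fromBlocks (fromBlocks A 0 0 (1 : Matrix γ γ R)) 0 0 (1 : Matrix δ δ R)).submatrix
        (Equiv.sumAssoc α γ δ).symm (Equiv.sumAssoc β γ δ).symm := by
  ext (a | i | i) (b | j | j) <;> simp [one_apply]

theorem minorIdeal_fromBlocks_zero_one (A : Matrix α β R) (s j : ℕ) :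
    (fromBlocks A 0 0 (1 : Matrix (Fin s) (Fin s) R)).minorIdeal j = A.minorIdeal (j - s) := by
  induction s generalizing j with
  | zero =>
    have : fromBlocks A 0 0 (1 : Matrix (Fin 0) (Fin 0) R) =
        A.submatrix (Equiv.sumEmpty α (Fin 0)) (Equiv.sumEmpty β (Fin 0)) := by
      ext (a | i) (b | j)
      exacts [rfl, j.elim0, i.elim0, i.elim0]
    rw [this, minorIdeal_submatrix_equiv, Nat.sub_zero]
  | succ s ih =>
    have : fromBlocks A 0 0 (1 : Matrix (Fin (s + 1)) (Fin (s + 1)) R) =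
        (fromBlocks A 0 0 (1 : Matrix (Fin s ⊕ Fin 1) (Fin s ⊕ Fin 1) R)).submatrix
          (Equiv.sumCongr (Equiv.refl α) finSumFinEquiv.symm)
          (Equiv.sumCongr (Equiv.refl β) finSumFinEquiv.symm) := by
      ext (a | i) (b | j) <;> simp [one_apply]
    rw [this, minorIdeal_submatrix_equiv, fromBlocks_zero_one_sum, minorIdeal_submatrix_equiv]
    cases j with
    | zero => simp
    | succ j => rw [minorIdeal_succ_fromBlocks_zero_one, ih, Nat.add_sub_add_right]

theorem minorIdeal_fromBlocks_one_eq_fromBlocks_zero_one [Fintype α] [Fintype γ]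
    [DecidableEq γ] (k : ℕ) (A : Matrix α β R) (V : Matrix α γ R) :
    (fromBlocks A V 0 (1 : Matrix γ γ R)).minorIdeal k =
      (fromBlocks A 0 0 (1 : Matrix γ γ R)).minorIdeal k := by
  classical
  have h₁ : fromBlocks (1 : Matrix α α R) V 0 1 * fromBlocks A 0 0 1 =
      fromBlocks A V 0 (1 : Matrix γ γ R) :=
    (fromBlocks_multiply _ _ _ _ _ _ _ _).trans (by simp)
  have h₂ : fromBlocks (1 : Matrix α α R) (-V) 0 1 * fromBlocks A V 0 1 =
      fromBlocks A 0 0 (1 : Matrix γ γ R) :=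
    (fromBlocks_multiply _ _ _ _ _ _ _ _).trans (by simp)
  exact le_antisymm (h₁ ▸ minorIdeal_mul_le_right k _ _) (h₂ ▸ minorIdeal_mul_le_right k _ _)

theorem minorIdeal_fromBlocks_one [Fintype α] (A : Matrix α β R) {s : ℕ}
    (V : Matrix α (Fin s) R) (j : ℕ) :
    (fromBlocks A V 0 (1 : Matrix (Fin s) (Fin s) R)).minorIdeal j = A.minorIdeal (j - s) := by
  rw [minorIdeal_fromBlocks_one_eq_fromBlocks_zero_one, minorIdeal_fromBlocks_zero_one]

section Presentation

variable {M : Type*} [AddCommGroup M] [Module R M]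

open LinearMap (ker range funLeft)

theorem exists_comp_mulVecLin_eq [Fintype γ] [DecidableEq γ] {π : (α → R) →ₗ[R] M}
    (hπ : Surjective π) (π' : (γ → R) →ₗ[R] M) :
    ∃ V : Matrix α γ R, π ∘ₗ V.mulVecLin = π' := by
  obtain ⟨f, hf⟩ := Module.projective_lifting_property π π' hπ
  exact ⟨LinearMap.toMatrix' f, by rw [← toLin'_apply', toLin'_toMatrix', hf]⟩

theorem ker_comp_mulVecLin_fromCols_one [Fintype α] [DecidableEq α] [Fintype β]
    [Fintype γ] [DecidableEq γ] {π : (α → R) →ₗ[R] M} {A : Matrix α β R}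
    (hA : ker π = range A.mulVecLin) (V : Matrix α γ R) :
    ker (π ∘ₗ (fromCols 1 V).mulVecLin) =
      range (fromBlocks A (-V) 0 (1 : Matrix γ γ R)).mulVecLin := by
  ext x
  rw [LinearMap.ker_comp, Submodule.mem_comap, hA]
  simp only [LinearMap.mem_range, mulVecLin_apply, fromCols_mulVec, one_mulVec, fromBlocks_mulVec,
    zero_mulVec, zero_add, neg_mulVec]
  constructor
  · rintro ⟨z, hz⟩
    refine ⟨Sum.elim z (x ∘ Sum.inr), ?_⟩
    ext (i | i) <;> simp [hz]
  · rintro ⟨u, rfl⟩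
    exact ⟨u ∘ Sum.inl, by simp⟩

theorem range_mulVecLin_submatrix_equiv [Fintype β] (B : Matrix α β R) (e : γ ≃ α) :
    range (B.submatrix e id).mulVecLin = (range B.mulVecLin).comap (funLeft R R e.symm) := by
  ext x
  simp only [LinearMap.mem_range, Submodule.mem_comap, mulVecLin_apply]
  exact exists_congr fun y => (e.eq_comp_symm (B *ᵥ y) x).symm

theorem minorIdeal_eq_of_presentations {ι κ : Type*} [Fintype ι] [Fintype κ] {m n : ℕ}
    {π : (Fin m → R) →ₗ[R] M} {π' : (Fin n → R) →ₗ[R] M} (hπ : Surjective π)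
    (hπ' : Surjective π') {A : Matrix (Fin m) ι R} {A' : Matrix (Fin n) κ R}
    (hA : ker π = range A.mulVecLin) (hA' : ker π' = range A'.mulVecLin) (k : ℕ) :
    A.minorIdeal (m - k) = A'.minorIdeal (n - k) := by
  obtain ⟨V, hV⟩ := exists_comp_mulVecLin_eq hπ π'
  obtain ⟨W, hW⟩ := exists_comp_mulVecLin_eq hπ' π
  -- both sides are `(x, y) ↦ π x + π' y`
  have hsymm : π ∘ₗ (fromCols 1 V).mulVecLin =
      (π' ∘ₗ (fromCols 1 W).mulVecLin) ∘ₗ funLeft R R (Equiv.sumComm (Fin m) (Fin n)).symm := by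
    have hV' y : π (V *ᵥ y) = π' y := LinearMap.congr_fun hV y
    have hW' y : π' (W *ᵥ y) = π y := LinearMap.congr_fun hW y
    refine LinearMap.ext fun x => ?_
    simp [fromCols_mulVec, hV', hW', comp_def, add_comm]
  have hrange : range (fromBlocks A (-V) 0 1).mulVecLin =
      range ((fromBlocks A' (-W) 0 1).submatrix (Equiv.sumComm (Fin m) (Fin n)) id).mulVecLin := by
    rw [← ker_comp_mulVecLin_fromCols_one hA, hsymm, LinearMap.ker_comp,
      ker_comp_mulVecLin_fromCols_one hA', range_mulVecLin_submatrix_equiv]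
  calc A.minorIdeal (m - k) = (fromBlocks A (-V) 0 1).minorIdeal (m + n - k) := by
        rw [minorIdeal_fromBlocks_one, Nat.sub_right_comm, Nat.add_sub_cancel]
    _ = ((fromBlocks A' (-W) 0 1).submatrix (Equiv.sumComm (Fin m) (Fin n)) id).minorIdeal
          (m + n - k) := minorIdeal_eq_of_range_eq _ hrange
    _ = (fromBlocks A' (-W) 0 1).minorIdeal (m + n - k) :=
          minorIdeal_submatrix_equiv _ _ _ (Equiv.refl _)
    _ = A'.minorIdeal (n - k) := by
        rw [minorIdeal_fromBlocks_one]
        congr 1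
        omega

end Presentation

theorem minorIdeal_diagonal {t n : ℕ} (h : t ≤ n)
    {d : Fin n → R} (hd : ∀ i j, i ≤ j → d i ∣ d j) :
    (diagonal d).minorIdeal t =
      Ideal.span {∏ i ∈ Finset.univ.filter (fun i : Fin n => (i : ℕ) < t), d i} := by
  refine le_antisymm (minorIdeal_le fun r c hr hc => ?_) ?_
  · have : (diagonal d).submatrix r c =
        diagonal (d ∘ r) * (1 : Matrix (Fin n) (Fin n) R).submatrix r c := by
      ext i j
      simp [diagonal_apply, one_apply]
    rw [this, det_mul, det_diagonal, Ideal.mem_span_singleton]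
    exact (Fin.prod_filter_val_lt_dvd_prod_of_injective hd hr).mul_right _
  · have : ∏ i : Fin t, d (Fin.castLE h i) =
        ((diagonal d).submatrix (Fin.castLE h) (Fin.castLE h)).det := by
      rw [submatrix_diagonal _ _ (Fin.castLE_injective h), det_diagonal]
      rfl
    rw [Ideal.span_le, Set.singleton_subset_iff, Fin.prod_filter_val_lt h, this]
    exact det_submatrix_mem_minorIdeal _ (Fin.castLE_injective h) (Fin.castLE_injective h)

end Matrix

theorem fittingIdeal_eq_minorIdeal {R M : Type*} [CommRing R] [AddCommGroup M] [Module R M]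
    {m n : ℕ} {A : Matrix (Fin m) (Fin n) R} (hA : IsPresentation (M := M) A) (k : ℕ) :
    fittingIdeal R M k = A.minorIdeal (m - k) := by
  obtain ⟨π, hπ, hker⟩ := hA
  refine le_antisymm (sSup_le ?_) (le_sSup ⟨m, n, A, ⟨π, hπ, hker⟩, rfl⟩)
  rintro _ ⟨m', n', A', ⟨π', hπ', hker'⟩, rfl⟩
  exact (Matrix.minorIdeal_eq_of_presentations hπ' hπ hker' hker k).le

theorem isPresentation_diagonal {R : Type*} [CommRing R] {n : ℕ} (d : Fin n → R) :
    IsPresentation (M := ∀ i, R ⧸ Ideal.span {d i}) (Matrix.diagonal d) := by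
  refine ⟨LinearMap.piMap fun i => (Ideal.span {d i}).mkQ,
    Surjective.piMap fun i => Submodule.mkQ_surjective _, ?_⟩
  ext x
  simp [funext_iff, Matrix.mulVec_diagonal, Ideal.Quotient.eq_zero_iff_mem,
    Ideal.mem_span_singleton', Classical.skolem, mul_comm]

theorem statement12_general {R : Type} [CommRing R]
    {n : ℕ} (d : Fin n → R)
    (hdvd : ∀ i j : Fin n, i ≤ j → d i ∣ d j)
    (k : ℕ) :
    fittingIdeal R (∀ i : Fin n, R ⧸ Ideal.span {d i}) k
      = Ideal.span {∏ i ∈ Finset.univ.filter (fun i : Fin n => (i : ℕ) < n - k), d i} := by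
  rw [fittingIdeal_eq_minorIdeal (isPresentation_diagonal d) k]
  exact Matrix.minorIdeal_diagonal (Nat.sub_le n k) hdvd

/-- Let `R` be a principal ideal domain and
`M = R/(d₁) × … × R/(dₙ)` a finitely generated torsion `R`-module with
`d₁ ∣ d₂ ∣ … ∣ dₙ` (all `dᵢ ≠ 0`).  Then for `0 ≤ k ≤ n` the `k`-th Fitting ideal of `M`
is the principal ideal generated by `d₁ ⋯ d_{n−k}` (empty product `= 1`, so
`Fitⁿ_R(M) = R`). -/
theorem statement12 {R : Type} [CommRing R] [IsDomain R] [IsPrincipalIdealRing R]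
    {n : ℕ} (d : Fin n → R) (hd : ∀ i, d i ≠ 0)
    (hdvd : ∀ i j : Fin n, i ≤ j → d i ∣ d j)
    (k : ℕ) (hk : k ≤ n) :
    fittingIdeal R (∀ i : Fin n, R ⧸ Ideal.span {d i}) k
      = Ideal.span {∏ i ∈ Finset.univ.filter (fun i : Fin n => (i : ℕ) < n - k), d i} :=
  statement12_general d hdvd k
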